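/- arXiv:2108.02697 — 2 statements merged into one kernel-verified Lean document; each statement's English description precedes it below -/
import Mathlib

section
/- For every finite simple outerplanar graph G and every dominating set S of G, one has |B_S(G)| ≤ 36·|S|, where B_S(G) = V_{4+}(G) \ S. -/
/-!
Let `ρ` send every vertex to itself or to a dominating neighbour in `S`, and contract the stars
`ρ⁻¹(s)`. The contracted graph `M` on `S` is again `K_{2,3}`-minor-free, so it has at most `3|S|`
edges: contracting an edge `vx` of a `K_{2,3}`-minor-free graph destroys only `vx` and the
duplicates coming from the at most two common neighbours of `v` and `x`.

A vertex `b ∈ V₄₊ \ S` has a neighbour `w` outside the closed neighbourhood of `ρ b` (again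
because `b` and `ρ b` have at most two common neighbours), and `b ↦ (ρ b, ρ w)` is a dart of `M`.
Over a dart `(s, t)` at most two `b` have `w = t`, these being common neighbours of `s` and `t`.
The others use at most two distinct `w`, since three would give three disjoint paths `s b w t`,
a `K_{2,3}` minor, and each `w` serves at most two `b`. So `|V₄₊ \ S| ≤ 6 · 2 · 3|S|`.
-/

/-- `HasMinor G H` : the graph `H` is a minor of `G`, witnessed by pairwise disjoint
nonempty connected branch sets, one for each vertex of `H`, with an edge of `G`
between the branch sets of any two adjacent vertices of `H`. -/
def HasMinor {V W : Type*} (G : SimpleGraph V) (H : SimpleGraph W) : Prop :=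
  ∃ f : W → Set V,
    (∀ w, (f w).Nonempty) ∧
    (∀ w, (SimpleGraph.induce (f w) G).Connected) ∧
    (∀ w₁ w₂, w₁ ≠ w₂ → Disjoint (f w₁) (f w₂)) ∧
    (∀ w₁ w₂, H.Adj w₁ w₂ → ∃ v₁ ∈ f w₁, ∃ v₂ ∈ f w₂, G.Adj v₁ v₂)

/-- A graph is outerplanar iff it has no `K₄` minor and no `K_{2,3}` minor. -/
def Outerplanar {V : Type*} (G : SimpleGraph V) : Prop :=
  ¬ HasMinor G (⊤ : SimpleGraph (Fin 4)) ∧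
  ¬ HasMinor G (completeBipartiteGraph (Fin 2) (Fin 3))

/-- `S` is a dominating set of `G`: every vertex not in `S` has a neighbor in `S`. -/
def IsDominatingSet {V : Type*} (G : SimpleGraph V) (S : Set V) : Prop :=
  ∀ v ∉ S, ∃ u ∈ S, G.Adj u v

/-- `V_{4+}(G)` : the set of vertices of degree at least 4. -/
def V4plus {V : Type*} (G : SimpleGraph V) : Set V :=
  {v | 4 ≤ (G.neighborSet v).ncard}

/-- `V*(G)` : the set of vertices of degree at most 3 all of whose neighbors have
degree at most 3. -/
def Vstar {V : Type*} (G : SimpleGraph V) : Set V :=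
  {v | (G.neighborSet v).ncard ≤ 3 ∧ ∀ u ∈ G.neighborSet v, (G.neighborSet u).ncard ≤ 3}

open Finset Function

notation "K₂₃" => completeBipartiteGraph (Fin 2) (Fin 3)

namespace SimpleGraph

variable {V W : Type*} {G : SimpleGraph V}

lemma induce_singleton_connected (v : V) : (G.induce {v}).Connected := by
  rw [induce_singleton_eq_top]
  exact connected_top

def contract (G : SimpleGraph V) (φ : V → W) : SimpleGraph W :=
  fromRel (Relation.Map G.Adj φ φ)

lemma contract_adj {φ : V → W} {a b : W} :
    (G.contract φ).Adj a b ↔ a ≠ b ∧ ∃ u v, G.Adj u v ∧ φ u = a ∧ φ v = b := by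
  simp only [contract, fromRel_adj, Relation.Map]
  constructor
  · rintro ⟨hab, ⟨u, v, h, rfl, rfl⟩ | ⟨u, v, h, rfl, rfl⟩⟩
    · exact ⟨hab, u, v, h, rfl, rfl⟩
    · exact ⟨hab, v, u, h.symm, rfl, rfl⟩
  · rintro ⟨hab, h⟩
    exact ⟨hab, Or.inl h⟩

lemma reachable_induce_preimage_of_walk {φ : V → W}
    (hfib : ∀ w, (G.induce (φ ⁻¹' {w})).Connected) {A : Set W} {a b : A}
    (p : ((G.contract φ).induce A).Walk a b) {u v : V} (hu : φ u = a) (hv : φ v = b) :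
    (G.induce (φ ⁻¹' A)).Reachable ⟨u, by simp [hu]⟩ ⟨v, by simp [hv]⟩ := by
  have hfiber : ∀ {u v : V} (hu : φ u ∈ A) (huv : φ u = φ v),
      (G.induce (φ ⁻¹' A)).Reachable ⟨u, hu⟩ ⟨v, show φ v ∈ A from huv ▸ hu⟩ := fun {u v} hu huv =>
    ((hfib (φ u)).preconnected ⟨u, rfl⟩ ⟨v, huv.symm⟩).map
      (induceHomOfLE G (fun y (hy : φ y = φ u) => show φ y ∈ A from hy ▸ hu)).toHom
  induction p generalizing u with
  | nil => exact hfiber _ (hu.trans hv.symm)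
  | cons hadj p ih =>
    obtain ⟨-, x, y, hxy, hx, hy⟩ := contract_adj.mp hadj
    exact (hfiber _ (hu.trans hx.symm)).trans
      ((show (G.induce _).Adj ⟨x, by simp [hx]⟩ ⟨y, by simp [hy]⟩ from hxy).reachable.trans
        (ih hy hv))

lemma Connected.induce_preimage_of_contract {φ : V → W} (hφ : Surjective φ)
    (hfib : ∀ w, (G.induce (φ ⁻¹' {w})).Connected) {A : Set W}
    (hA : ((G.contract φ).induce A).Connected) : (G.induce (φ ⁻¹' A)).Connected := by
  obtain ⟨a, ha⟩ := hA.nonempty.some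
  obtain ⟨u, rfl⟩ := hφ a
  refine (connected_iff_exists_forall_reachable _).2 ⟨⟨u, ha⟩, fun ⟨v, hv⟩ => ?_⟩
  obtain ⟨p⟩ := hA.preconnected ⟨φ u, ha⟩ ⟨φ v, hv⟩
  exact reachable_induce_preimage_of_walk hfib p rfl rfl

end SimpleGraph

open SimpleGraph

theorem HasMinor.of_contract {V W U : Type*} {G : SimpleGraph V} {K : SimpleGraph U} {φ : V → W}
    (hφ : Surjective φ) (hfib : ∀ w, (G.induce (φ ⁻¹' {w})).Connected)
    (h : HasMinor (G.contract φ) K) : HasMinor G K := by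
  obtain ⟨f, hne, hconn, hdisj, hadj⟩ := h
  refine ⟨fun k => φ ⁻¹' f k, fun k => (hne k).preimage hφ,
    fun k => (hconn k).induce_preimage_of_contract hφ hfib,
    fun k l hkl => (hdisj k l hkl).preimage φ, fun k l hkl => ?_⟩
  obtain ⟨a, ha, b, hb, hab⟩ := hadj k l hkl
  obtain ⟨-, u, v, huv, rfl, rfl⟩ := contract_adj.mp hab
  exact ⟨u, ha, v, hb, huv⟩

structure IsStarRetraction {V : Type*} (G : SimpleGraph V) (S : Set V) (ρ : V → S) : Prop where
  apply_coe : ∀ s : S, ρ s = s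
  adj_apply : ∀ v ∉ S, G.Adj (ρ v) v

theorem IsDominatingSet.exists_isStarRetraction {V : Type*} {G : SimpleGraph V} {S : Set V}
    (hS : IsDominatingSet G S) : ∃ ρ : V → S, IsStarRetraction G S ρ := by
  classical
  choose! σ hσS hσadj using hS
  refine ⟨fun v => if hv : v ∈ S then ⟨v, hv⟩ else ⟨σ v, hσS v hv⟩, ⟨fun s => ?_, fun v hv => ?_⟩⟩
  · simp
  · simpa [hv] using hσadj v hv

namespace IsStarRetraction

variable {V : Type*} {G : SimpleGraph V} {S : Set V} {ρ : V → S}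

lemma coe_apply_of_mem (hρ : IsStarRetraction G S ρ) {v : V} (hv : v ∈ S) : (ρ v : V) = v :=
  congrArg Subtype.val (hρ.apply_coe ⟨v, hv⟩)

lemma surjective (hρ : IsStarRetraction G S ρ) : Surjective ρ :=
  fun s => ⟨s, hρ.apply_coe s⟩

lemma eq_or_adj_of_apply_eq (hρ : IsStarRetraction G S ρ) {v : V} {s : S} (h : ρ v = s) :
    v = s ∨ G.Adj s v := by
  by_cases hv : v ∈ S
  · exact Or.inl (by rw [← h, hρ.coe_apply_of_mem hv])
  · exact Or.inr (h ▸ hρ.adj_apply v hv)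

lemma induce_fiber_connected (hρ : IsStarRetraction G S ρ) (s : S) :
    (G.induce (ρ ⁻¹' {s})).Connected := by
  have hs : (s : V) ∈ ρ ⁻¹' {s} := hρ.apply_coe s
  refine induce_connected_of_patches _ hs fun {v} hv => ?_
  rcases hρ.eq_or_adj_of_apply_eq hv with rfl | hadj
  · exact ⟨{↑s}, Set.singleton_subset_iff.2 hs, rfl, rfl, Reachable.refl _⟩
  · exact ⟨{↑s, v}, Set.insert_subset hs (Set.singleton_subset_iff.2 hv), by simp, by simp,
      (induce_pair_connected_of_adj hadj).preconnected _ _⟩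

lemma hasMinor_of_contract (hρ : IsStarRetraction G S ρ) {U : Type*} {K : SimpleGraph U}
    (h : HasMinor (G.contract ρ) K) : HasMinor G K :=
  h.of_contract hρ.surjective hρ.induce_fiber_connected

lemma induce_le_contract (hρ : IsStarRetraction G S ρ) : G.induce S ≤ G.contract ρ :=
  fun a b hab => contract_adj.2 ⟨fun h => G.ne_of_adj hab (congrArg Subtype.val h),
    a, b, hab, hρ.apply_coe a, hρ.apply_coe b⟩

end IsStarRetraction

section KTwoThree

variable {V : Type*} {G : SimpleGraph V}

theorem hasMinor_K₂₃_of_disjoint_connected {a b : V} (hab : a ≠ b) (C : Fin 3 → Set V)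
    (hconn : ∀ j, (G.induce (C j)).Connected) (hdisj : Pairwise (Disjoint on C))
    (ha : ∀ j, a ∉ C j ∧ ∃ u ∈ C j, G.Adj a u) (hb : ∀ j, b ∉ C j ∧ ∃ u ∈ C j, G.Adj b u) :
    HasMinor G K₂₃ := by
  have hterm : ∀ i j, ![a, b] i ∉ C j ∧ ∃ u ∈ C j, G.Adj (![a, b] i) u := by
    intro i j; fin_cases i
    exacts [ha j, hb j]
  refine ⟨Sum.elim (fun i => {![a, b] i}) C, ?_, ?_, ?_, ?_⟩
  · rintro (i | j)
    · exact Set.singleton_nonempty _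
    · exact Set.nonempty_coe_sort.1 (hconn j).nonempty
  · rintro (i | j)
    · exact induce_singleton_connected _
    · exact hconn j
  · rintro (i | j) (i' | j') h
    · fin_cases i <;> fin_cases i' <;> simp_all [eq_comm]
    · simpa using (hterm i j').1
    · simpa using (hterm i' j).1
    · exact hdisj (fun h' => h (congrArg Sum.inr h'))
  · rintro (i | j) (i' | j') h
    · simp at h
    · obtain ⟨u, hu, hadj⟩ := (hterm i j').2
      exact ⟨_, rfl, u, hu, hadj⟩
    · obtain ⟨u, hu, hadj⟩ := (hterm i' j).2
      exact ⟨u, hu, _, rfl, hadj.symm⟩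
    · simp at h

theorem ncard_le_two_of_not_hasMinor_K₂₃ (hG : ¬ HasMinor G K₂₃) {a b : V} (hab : a ≠ b)
    {ι : Type*} {T : Set ι} (C : ι → Set V) (hconn : ∀ i ∈ T, (G.induce (C i)).Connected)
    (hdisj : T.PairwiseDisjoint C) (ha : ∀ i ∈ T, a ∉ C i ∧ ∃ u ∈ C i, G.Adj a u)
    (hb : ∀ i ∈ T, b ∉ C i ∧ ∃ u ∈ C i, G.Adj b u) : T.ncard ≤ 2 := by
  rcases T.finite_or_infinite with hT | hT
  · by_contra! h
    obtain ⟨i, hi, j, hj, k, hk, hij, hik, hjk⟩ := (Set.two_lt_ncard hT).1 h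
    have hmem : ∀ m, ![i, j, k] m ∈ T := by
      intro m; fin_cases m <;> assumption
    refine hG (hasMinor_K₂₃_of_disjoint_connected hab (C ∘ ![i, j, k]) (fun m => hconn _ (hmem m))
      (fun m m' hm => hdisj (hmem m) (hmem m') ?_) (fun m => ha _ (hmem m))
      (fun m => hb _ (hmem m)))
    fin_cases m <;> fin_cases m' <;> simp_all [eq_comm]
  · simp [hT.ncard]

theorem ncard_commonNeighbors_le_two (hG : ¬ HasMinor G K₂₃) {a b : V} (hab : a ≠ b) :
    (G.commonNeighbors a b).ncard ≤ 2 :=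
  ncard_le_two_of_not_hasMinor_K₂₃ hG hab (fun u => {u}) (fun u _ => induce_singleton_connected u)
    (Set.pairwiseDisjoint_singleton' _)
    (fun _ hu => ⟨(G.ne_of_adj hu.1), _, rfl, hu.1⟩)
    (fun _ hu => ⟨(G.ne_of_adj hu.2), _, rfl, hu.2⟩)

end KTwoThree

section Density

variable {W : Type*} [Fintype W] [DecidableEq W] {H : SimpleGraph W} [DecidableRel H.Adj]

lemma degree_le_card_sdiff_add_three (hH : ¬ HasMinor H K₂₃) {v x : W} (hvx : H.Adj v x) :
    H.degree v ≤ #(H.neighborFinset v \ insert x (H.neighborFinset x)) + 3 := by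
  have hcommon : #(H.neighborFinset v ∩ H.neighborFinset x) ≤ 2 := by
    rw [← Set.ncard_coe_finset]
    simpa [commonNeighbors] using ncard_commonNeighbors_le_two hH hvx.ne
  calc H.degree v
      = #(H.neighborFinset v \ insert x (H.neighborFinset x))
        + #(H.neighborFinset v ∩ insert x (H.neighborFinset x)) :=
        (card_sdiff_add_card_inter _ _).symm
    _ ≤ #(H.neighborFinset v \ insert x (H.neighborFinset x))
        + #(insert x (H.neighborFinset v ∩ H.neighborFinset x)) := by
        gcongr
        intro y
        simp only [mem_inter, mem_insert]
        tauto
    _ ≤ _ := by grw [card_insert_le, hcommon]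

lemma card_edgeFinset_le_contract_add_three (hH : ¬ HasMinor H K₂₃) {v : W}
    {ρ : W → ({v}ᶜ : Set W)} (hρ : IsStarRetraction H {v}ᶜ ρ)
    [DecidableRel (H.contract ρ).Adj] :
    #H.edgeFinset ≤ #(H.contract ρ).edgeFinset + 3 := by
  have hρv : H.Adj (ρ v) v := hρ.adj_apply v (by simp)
  have hρy : ∀ y ∈ H.neighborFinset v, (ρ y : W) = y := fun y hy =>
    hρ.coe_apply_of_mem (H.ne_of_adj ((mem_neighborFinset _ _ _).1 hy)).symm
  have hdeg := degree_le_card_sdiff_add_three hH hρv.symm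
  set N := H.neighborFinset v \ insert (ρ v : W) (H.neighborFinset (ρ v))
  have hdel : #H.edgeFinset = #(H.induce {v}ᶜ).edgeFinset + H.degree v := by
    rw [card_edgeFinset_induce_compl_singleton, card_edgeFinset_deleteIncidenceSet]
    have := H.degree_le_card_edgeFinset v
    omega
  have hnew : #(H.induce {v}ᶜ).edgeFinset + #N ≤ #(H.contract ρ).edgeFinset := by
    have hinj : Set.InjOn (fun y => s(ρ v, ρ y)) N := by
      intro y hy y' hy' h
      rw [← hρy y (mem_sdiff.1 hy).1, ← hρy y' (mem_sdiff.1 hy').1, Sym2.congr_right.1 h]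
    rw [← card_image_of_injOn hinj, ← card_union_of_disjoint]
    · refine card_le_card (union_subset (edgeFinset_mono hρ.induce_le_contract) ?_)
      simp only [subset_iff, mem_image, mem_edgeFinset]
      rintro _ ⟨y, hy, rfl⟩
      obtain ⟨hvy, hxy⟩ := mem_sdiff.1 hy
      refine contract_adj.2 ⟨fun h => ?_, v, y, (mem_neighborFinset _ _ _).1 hvy, rfl, rfl⟩
      have : (ρ v : W) = y := by rw [show ρ v = ρ y from h, hρy y hvy]
      exact hxy (this ▸ mem_insert_self _ _)
    · simp only [Finset.disjoint_left, mem_image, mem_edgeFinset]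
      rintro _ hadj ⟨y, hy, rfl⟩
      obtain ⟨hvy, hxy⟩ := mem_sdiff.1 hy
      have : H.Adj (ρ v) y := by rw [← hρy y hvy]; exact hadj
      exact hxy (mem_insert_of_mem ((mem_neighborFinset _ _ _).2 this))
  omega

theorem card_edgeFinset_le_of_not_hasMinor_K₂₃ (hH : ¬ HasMinor H K₂₃) :
    #H.edgeFinset ≤ 3 * Fintype.card W := by
  induction h : Fintype.card W generalizing W with
  | zero =>
    have : IsEmpty W := Fintype.card_eq_zero_iff.1 h
    simp [edgeFinset_eq_empty.2 (Subsingleton.elim H ⊥)]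
  | succ n ih =>
    by_cases hE : H = ⊥
    · simp [edgeFinset_eq_empty.2 hE]
    obtain ⟨v, x, hvx⟩ : ∃ v x, H.Adj v x := by
      by_contra! h'
      exact hE (edgeSet_eq_empty.1 (Set.eq_empty_iff_forall_notMem.2 fun e => e.ind fun a b => h' a b))
    obtain ⟨ρ, hρ⟩ : ∃ ρ : W → ({v}ᶜ : Set W), IsStarRetraction H {v}ᶜ ρ :=
      IsDominatingSet.exists_isStarRetraction fun u hu =>
        ⟨x, hvx.ne', by simpa using (show u = v by simpa using hu) ▸ hvx.symm⟩
    classical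
    have hcard : Fintype.card ({v}ᶜ : Set W) = n := by
      simp [Finset.filter_ne', h]
    have := ih (fun h => hH (hρ.hasMinor_of_contract h)) hcard
    have := card_edgeFinset_le_contract_add_three hH hρ
    omega

end Density

lemma Set.ncard_le_mul_ncard_image {α β : Type*} [Finite α] {s : Set α} {f : α → β} {n : ℕ}
    (h : ∀ b ∈ f '' s, (s ∩ f ⁻¹' {b}).ncard ≤ n) : s.ncard ≤ n * (f '' s).ncard := by
  classical
  obtain ⟨t, rfl⟩ := s.toFinite.exists_finset_coe
  rw [← coe_image, Set.ncard_coe_finset, Set.ncard_coe_finset]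
  refine card_le_mul_card_image t n fun b hb => ?_
  have := h b (by simpa using hb)
  rwa [← Set.ncard_coe_finset, coe_filter]

section Domination

variable {V : Type*} {G : SimpleGraph V}

lemma exists_adj_ne_not_adj_of_four_le [Finite V] (hG : ¬ HasMinor G K₂₃) {a b : V}
    (hab : G.Adj a b) (hb : 4 ≤ (G.neighborSet b).ncard) :
    ∃ w, G.Adj b w ∧ w ≠ a ∧ ¬ G.Adj a w := by
  by_contra! h
  have hsub : G.neighborSet b ⊆ insert a (G.commonNeighbors a b) := fun w hw => by
    by_cases hwa : w = a
    · exact Or.inl hwa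
    · exact Or.inr ⟨h w hw hwa, hw⟩
  have := (Set.ncard_le_ncard hsub).trans (Set.ncard_insert_le _ _)
  have := ncard_commonNeighbors_le_two hG hab.ne
  omega

namespace IsStarRetraction

variable {S : Set V} {ρ : V → S}

lemma ncard_image_le_two (hρ : IsStarRetraction G S ρ) (hG : ¬ HasMinor G K₂₃) {s t : S}
    (hst : s ≠ t) {Q : Set V} {w : V → V}
    (hQ : ∀ b ∈ Q, b ∉ S ∧ w b ∉ S ∧ ρ b = s ∧ ρ (w b) = t ∧ G.Adj b (w b)) :
    (w '' Q).ncard ≤ 2 := by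
  obtain ⟨Q', hQ'Q, hbij⟩ := Set.exists_subset_bijOn Q w
  have hQ' : ∀ b ∈ Q', _ := fun b hb => hQ b (hQ'Q hb)
  have hne : ∀ b ∈ Q', ∀ b' ∈ Q', b ≠ w b' := fun b hb b' hb' h =>
    hst (by rw [← (hQ' b hb).2.2.1, ← (hQ' b' hb').2.2.2.1, h])
  rw [← hbij.image_eq, hbij.injOn.ncard_image]
  refine ncard_le_two_of_not_hasMinor_K₂₃ hG (Subtype.coe_injective.ne hst)
    (fun b => {b, w b}) (fun b hb => induce_pair_connected_of_adj (hQ' b hb).2.2.2.2)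
    (fun b hb b' hb' hbb' => ?_) (fun b hb => ?_) (fun b hb => ?_)
  · simp only [onFun, Set.disjoint_insert_left, Set.disjoint_insert_right,
      Set.disjoint_singleton, Set.mem_insert_iff, Set.mem_singleton_iff, not_or]
    exact ⟨⟨hbb'.symm, hne b' hb' b hb⟩, hne b hb b' hb',
      fun h => hbb' (hbij.injOn hb hb' h)⟩
  · obtain ⟨hbS, hwS, hbs, -, -⟩ := hQ' b hb
    refine ⟨?_, b, Set.mem_insert _ _, hbs ▸ hρ.adj_apply b hbS⟩
    rintro (h | h)
    · exact hbS (h ▸ s.2)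
    · exact hwS (h ▸ s.2)
  · obtain ⟨hbS, hwS, -, hwt, -⟩ := hQ' b hb
    refine ⟨?_, w b, Set.mem_insert_of_mem _ rfl, hwt ▸ hρ.adj_apply (w b) hwS⟩
    rintro (h | h)
    · exact hbS (h ▸ t.2)
    · exact hwS (h ▸ t.2)

lemma ncard_le_six [Finite V] (hρ : IsStarRetraction G S ρ) (hG : ¬ HasMinor G K₂₃) {s t : S}
    (hst : s ≠ t) {P : Set V} {w : V → V}
    (hP : ∀ b ∈ P, b ∉ S ∧ ρ b = s ∧ ρ (w b) = t ∧ G.Adj b (w b)) : P.ncard ≤ 6 := by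
  have hsb : ∀ b ∈ P, G.Adj s b := fun b hb => (hP b hb).2.1 ▸ hρ.adj_apply b (hP b hb).1
  set Q := {b ∈ P | w b ∉ S}
  have hrich : P \ Q ⊆ G.commonNeighbors s t := by
    rintro b ⟨hbP, hbQ⟩
    have hwS : w b ∈ S := by_contra fun h => hbQ ⟨hbP, h⟩
    have hwt : w b = t := by rw [← hρ.coe_apply_of_mem hwS, (hP b hbP).2.2.1]
    exact ⟨hsb b hbP, hwt ▸ (hP b hbP).2.2.2.symm⟩
  have hfib : ∀ c ∈ w '' Q, (Q ∩ w ⁻¹' {c}).ncard ≤ 2 := by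
    rintro _ ⟨b, hbQ, rfl⟩
    refine (Set.ncard_le_ncard fun b' hb' => ?_).trans
      (ncard_commonNeighbors_le_two hG (fun h : (s : V) = w b => hbQ.2 (h ▸ s.2)))
    obtain ⟨⟨hb'P, -⟩, hb'w⟩ := hb'
    exact ⟨hsb b' hb'P, hb'w ▸ (hP b' hb'P).2.2.2.symm⟩
  have himage : (w '' Q).ncard ≤ 2 := hρ.ncard_image_le_two hG hst fun b hb =>
    ⟨(hP b hb.1).1, hb.2, (hP b hb.1).2⟩
  calc P.ncard ≤ (P \ Q).ncard + Q.ncard := Set.ncard_le_ncard_sdiff_add_ncard _ _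
    _ ≤ 2 + 2 * 2 := by
      gcongr
      · exact (Set.ncard_le_ncard hrich).trans
          (ncard_commonNeighbors_le_two hG (Subtype.coe_injective.ne hst))
      · exact (Set.ncard_le_mul_ncard_image hfib).trans (by omega)

theorem ncard_le_six_mul_card_dart [Finite V] (hρ : IsStarRetraction G S ρ)
    (hG : ¬ HasMinor G K₂₃) : (V4plus G \ S).ncard ≤ 6 * Nat.card (G.contract ρ).Dart := by
  classical
  have := Fintype.ofFinite V
  choose! w hw using fun b (hb : b ∈ V4plus G \ S) =>
    exists_adj_ne_not_adj_of_four_le hG (hρ.adj_apply b hb.2) hb.1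
  have hdart : ∀ b ∈ V4plus G \ S, (G.contract ρ).Adj (ρ b) (ρ (w b)) := fun b hb =>
    contract_adj.2 ⟨fun h => (hρ.eq_or_adj_of_apply_eq h.symm).elim (hw b hb).2.1 (hw b hb).2.2,
      b, w b, (hw b hb).1, rfl, rfl⟩
  rw [Set.ncard_eq_toFinset_card', Nat.card_eq_fintype_card]
  refine (card_le_mul_card_image_of_maps_to (f := fun b => (ρ b, ρ (w b)))
    (t := univ.image Dart.toProd) (fun b hb => ?_) 6 fun p hp => ?_).trans
    (Nat.mul_le_mul_left 6 card_image_le)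
  · rw [Set.mem_toFinset] at hb
    exact mem_image.2 ⟨⟨_, hdart b hb⟩, mem_univ _, rfl⟩
  · obtain ⟨d, -, rfl⟩ := mem_image.1 hp
    rw [← Set.ncard_coe_finset]
    refine hρ.ncard_le_six hG d.adj.ne (w := w) fun b hb => ?_
    simp only [coe_filter, Set.mem_toFinset, Set.mem_ofPred_eq] at hb
    obtain ⟨hb, hbd⟩ := hb
    exact ⟨hb.2, by rw [← hbd], by rw [← hbd], (hw b hb).1⟩

end IsStarRetraction

end Domination

/-- For every finite simple outerplanar graph `G` and every dominating set `S` of `G`,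
`|B_S(G)| ≤ 36·|S|` where `B_S(G) = V₄₊(G) \ S`. -/
theorem stmt_6 {V : Type*} [Fintype V] (G : SimpleGraph V) (hG : Outerplanar G)
    (S : Set V) (hS : IsDominatingSet G S) :
    (V4plus G \ S).ncard ≤ 36 * S.ncard := by
  classical
  obtain ⟨ρ, hρ⟩ := hS.exists_isStarRetraction
  have hM : ¬ HasMinor (G.contract ρ) K₂₃ := fun h => hG.2 (hρ.hasMinor_of_contract h)
  calc (V4plus G \ S).ncard ≤ 6 * Nat.card (G.contract ρ).Dart :=
        hρ.ncard_le_six_mul_card_dart hG.2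
    _ = 12 * #(G.contract ρ).edgeFinset := by
        rw [Nat.card_eq_fintype_card, dart_card_eq_twice_card_edges]; ring
    _ ≤ 12 * (3 * Fintype.card S) := by grw [card_edgeFinset_le_of_not_hasMinor_K₂₃ hM]
    _ = 36 * S.ncard := by rw [← Nat.card_eq_fintype_card, Nat.card_coe_set_eq]; ring
end

section
/- Let G be a finite simple forest (a graph with no cycles) and let T be the set consisting of all vertices of degree at least 2 together with all vertices having no neighbor of degree at least 2. Then T is a dominating set of G, and for every dominating set S of G one has |T| ≤ 3·|S|. -/
/-! Vertices of `T` either have degree at least 2 or lie in a component `K₁` or `K₂`; every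
dominating vertex of such a component accounts for at most two of the latter. For the rest,
send each vertex `v` to a dominator `D v ∈ S`. A vertex of degree at least 2 outside `S` has a
neighbour with a different dominator, for otherwise it would lie on a triangle; so it is an end
of a cross edge, joining two classes of `D`. The cross edges and the star edges `v — D v`,
`v ∉ S`, are distinct edges of a forest, so there are at most `|V| - |V \ S| = |S|` cross
edges, at most `2|S|` vertices of degree at least 2 outside `S`, and at most `3|S|` in all.
Running this on the union of the larger components combines the two counts. -/

namespace Set

theorem ncard_le_mul_ncard_of_subset_biUnion {α ι : Type*} [Finite α] [Finite ι] {t : Set ι}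
    {s : ι → Set α} {k : ℕ} (hk : ∀ i ∈ t, (s i).ncard ≤ k) {X : Set α}
    (hX : X ⊆ ⋃ i ∈ t, s i) : X.ncard ≤ k * t.ncard := by
  have ht := t.toFinite
  calc X.ncard ≤ (⋃ i ∈ ht.toFinset, s i).ncard := ncard_le_ncard (by simpa using hX)
    _ ≤ ∑ i ∈ ht.toFinset, (s i).ncard := Finset.set_ncard_biUnion_le _ _
    _ ≤ ∑ _i ∈ ht.toFinset, k := Finset.sum_le_sum (by simpa using hk)
    _ = k * t.ncard := by rw [Finset.sum_const, smul_eq_mul, ncard_eq_toFinset_card t ht, mul_comm]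

end Set

namespace SimpleGraph

variable {V : Type*} {G : SimpleGraph V}

structure IsDominatorMap (G : SimpleGraph V) (S : Set V) (D : V → V) : Prop where
  mem : ∀ v, D v ∈ S
  eq_self : ∀ v ∈ S, D v = v
  adj : ∀ v ∉ S, G.Adj v (D v)

theorem _root_.IsDominatingSet.exists_isDominatorMap {S : Set V} (hS : IsDominatingSet G S) :
    ∃ D, IsDominatorMap G S D := by
  have : ∀ v, ∃ d ∈ S, (v ∈ S → d = v) ∧ (v ∉ S → G.Adj v d) := by
    intro v
    by_cases hv : v ∈ S
    · exact ⟨v, hv, fun _ => rfl, fun h => absurd hv h⟩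
    · obtain ⟨u, hu, huv⟩ := hS v hv
      exact ⟨u, hu, fun h => absurd h hv, fun _ => huv.symm⟩
  choose D hDS hDfix hDadj using this
  exact ⟨D, ⟨hDS, hDfix, hDadj⟩⟩

def crossEdges (G : SimpleGraph V) (D : V → V) (W : Set V) : Set (Sym2 V) :=
  {e ∈ G.edgeSet ∩ W.sym2 | ¬ (e.map D).IsDiag}

/-- The vertices of the components isomorphic to `K₁` or `K₂`. -/
def tinyComponentVerts (G : SimpleGraph V) : Set V :=
  {v | (G.neighborSet v).ncard ≤ 1 ∧ ∀ u ∈ G.neighborSet v, (G.neighborSet u).ncard ≤ 1}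

theorem IsAcyclic.exists_adj_dominator_ne (hG : G.IsAcyclic) {S : Set V} {D : V → V}
    (hD : IsDominatorMap G S D) {v : V} (hv : v ∉ S) (h2 : 2 ≤ (G.neighborSet v).ncard) :
    ∃ u, G.Adj v u ∧ D u ≠ D v := by
  classical
  obtain ⟨u, hu, hne⟩ := Set.exists_ne_of_one_lt_ncard h2 (D v)
  refine ⟨u, hu, fun hDu => ?_⟩
  have huS : u ∉ S := fun huS => hne (by rw [← hDu, hD.eq_self u huS])
  exact hG.cliqueFree le_rfl {v, u, D v}
    (is3Clique_triple_iff.mpr ⟨hu, hD.adj v hv, hDu ▸ hD.adj u huS⟩)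

variable [Finite V]

theorem IsAcyclic.ncard_edgeSet_le (hG : G.IsAcyclic) : G.edgeSet.ncard ≤ Nat.card V := by
  cases isEmpty_or_nonempty V
  · simp [Set.eq_empty_of_isEmpty G.edgeSet]
  obtain ⟨T, hGT, hT⟩ := exists_maximal_isAcyclic_of_le_isAcyclic (le_top : G ≤ ⊤) hG
  have hTcard := (isTree_iff_connected_and_card.mp
    ((connected_top.maximal_le_isAcyclic_iff_isTree le_top).mp hT)).2
  rw [Nat.card_coe_set_eq] at hTcard
  exact (Set.ncard_le_ncard (edgeSet_mono hGT)).trans (by omega)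

theorem IsAcyclic.ncard_edgeSet_inter_sym2_le (hG : G.IsAcyclic) (W : Set V) :
    (G.edgeSet ∩ W.sym2).ncard ≤ W.ncard := by
  have hsub : G.edgeSet ∩ W.sym2 ⊆ Sym2.map (↑) '' (G.induce W).edgeSet := by
    rintro ⟨a, b⟩ ⟨hab, ha, hb⟩
    exact ⟨s(⟨a, ha⟩, ⟨b, hb⟩), hab, rfl⟩
  calc (G.edgeSet ∩ W.sym2).ncard ≤ (Sym2.map (↑) '' (G.induce W).edgeSet).ncard :=
        Set.ncard_le_ncard hsub
    _ ≤ (G.induce W).edgeSet.ncard := Set.ncard_image_le (Set.toFinite _)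
    _ ≤ W.ncard := (hG.induce W).ncard_edgeSet_le.trans (Nat.card_coe_set_eq W).le

variable {S W : Set V} {D : V → V}

theorem IsAcyclic.ncard_crossEdges_le (hG : G.IsAcyclic) (hD : IsDominatorMap G S D)
    (hW : ∀ ⦃u v⦄, G.Adj u v → u ∈ W → v ∈ W) :
    (G.crossEdges D W).ncard ≤ (S ∩ W).ncard := by
  set starEdges := (fun v => s(v, D v)) '' (W \ S)
  have hstar : starEdges ⊆ G.edgeSet ∩ W.sym2 := by
    rintro _ ⟨v, ⟨hvW, hvS⟩, rfl⟩
    exact ⟨hD.adj v hvS, hvW, hW (hD.adj v hvS) hvW⟩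
  have hdisj : Disjoint (G.crossEdges D W) starEdges := by
    rw [Set.disjoint_right]
    rintro _ ⟨v, -, rfl⟩ ⟨-, hne⟩
    exact hne (by simp [hD.eq_self _ (hD.mem v)])
  have hinj : (W \ S).InjOn (fun v => s(v, D v)) := by
    rintro v ⟨-, hv⟩ w - h
    rcases Sym2.eq_iff.mp h with ⟨h1, -⟩ | ⟨h1, -⟩
    · exact h1
    · exact absurd (h1 ▸ hD.mem w) hv
  have hsum : (G.crossEdges D W).ncard + (W \ S).ncard ≤ (G.edgeSet ∩ W.sym2).ncard := by
    rw [← hinj.ncard_image, ← Set.ncard_union_eq hdisj]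
    exact Set.ncard_le_ncard (Set.union_subset (fun e he => he.1) hstar)
  have hedges := hG.ncard_edgeSet_inter_sym2_le W
  have hsplit := Set.ncard_inter_add_ncard_sdiff_eq_ncard W S
  rw [Set.inter_comm] at hsplit
  omega

theorem IsAcyclic.ncard_inter_setOf_two_le_ncard_neighborSet_le (hG : G.IsAcyclic)
    (hS : IsDominatingSet G S) (hW : ∀ ⦃u v⦄, G.Adj u v → u ∈ W → v ∈ W) :
    (W ∩ {v | 2 ≤ (G.neighborSet v).ncard}).ncard ≤ 3 * (S ∩ W).ncard := by
  obtain ⟨D, hD⟩ := hS.exists_isDominatorMap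
  set A := W ∩ {v | 2 ≤ (G.neighborSet v).ncard}
  have hcover : A \ S ⊆ ⋃ e ∈ G.crossEdges D W, (e : Set V) := by
    rintro v ⟨⟨hvW, h2⟩, hvS⟩
    obtain ⟨u, hu, hne⟩ := hG.exists_adj_dominator_ne hD hvS h2
    exact Set.mem_biUnion (x := s(v, u)) ⟨⟨hu, hvW, hW hu hvW⟩, by simpa using hne.symm⟩
      (Sym2.mem_mk_left v u)
  have hdiff : (A \ S).ncard ≤ 2 * (G.crossEdges D W).ncard := by
    refine Set.ncard_le_mul_ncard_of_subset_biUnion (fun e _ => ?_) hcover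
    induction e using Sym2.ind with
    | h a b => simpa only [Sym2.coe_mk, Set.ncard_singleton] using Set.ncard_insert_le a {b}
  have hinter : (A ∩ S).ncard ≤ (S ∩ W).ncard :=
    Set.ncard_le_ncard fun v ⟨⟨hvW, _⟩, hvS⟩ => ⟨hvS, hvW⟩
  have hsplit := Set.ncard_inter_add_ncard_sdiff_eq_ncard A S
  have hcross := hG.ncard_crossEdges_le hD hW
  omega

theorem mem_tinyComponentVerts_of_adj {u v : V} (hu : u ∈ G.tinyComponentVerts)
    (h : G.Adj u v) : v ∈ G.tinyComponentVerts := by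
  refine ⟨hu.2 v h, fun w hw => ?_⟩
  obtain rfl : w = u := (Set.ncard_le_one_iff).mp (hu.2 v h) hw h.symm
  exact hu.1

theorem ncard_tinyComponentVerts_le (hS : IsDominatingSet G S) :
    G.tinyComponentVerts.ncard ≤ 2 * (S ∩ G.tinyComponentVerts).ncard := by
  refine Set.ncard_le_mul_ncard_of_subset_biUnion (s := fun s => insert s (G.neighborSet s))
    (fun s hs => (Set.ncard_insert_le _ _).trans (by have := hs.2.1; omega)) fun v hv => ?_
  by_cases hvS : v ∈ S
  · exact Set.mem_biUnion (show v ∈ S ∩ G.tinyComponentVerts from ⟨hvS, hv⟩) (Set.mem_insert v _)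
  · obtain ⟨u, hu, huv⟩ := hS v hvS
    exact Set.mem_biUnion (show u ∈ S ∩ G.tinyComponentVerts from
      ⟨hu, mem_tinyComponentVerts_of_adj hv huv.symm⟩) (Set.mem_insert_of_mem _ huv)

end SimpleGraph

open SimpleGraph

/-- For a finite simple forest `G`, the set `T` of all vertices of degree at least 2
together with all vertices having no neighbor of degree at least 2 is a dominating
set, and `|T| ≤ 3·|S|` for every dominating set `S`. -/
theorem stmt_14 {V : Type*} [Fintype V] (G : SimpleGraph V) (hG : G.IsAcyclic) :
    IsDominatingSet G
      ({v : V | 2 ≤ (G.neighborSet v).ncard} ∪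
        {v : V | ∀ u ∈ G.neighborSet v, ¬ 2 ≤ (G.neighborSet u).ncard}) ∧
    ∀ S : Set V, IsDominatingSet G S →
      ({v : V | 2 ≤ (G.neighborSet v).ncard} ∪
        {v : V | ∀ u ∈ G.neighborSet v, ¬ 2 ≤ (G.neighborSet u).ncard}).ncard
        ≤ 3 * S.ncard := by
  refine ⟨fun v hv => ?_, fun S hS => ?_⟩
  · simp only [Set.mem_union, Set.mem_ofPred_eq, not_or, not_forall, not_not] at hv
    obtain ⟨-, u, hu, h2⟩ := hv
    exact ⟨u, Or.inl h2, hu.symm⟩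
  set X := G.tinyComponentVerts
  have hT : {v : V | 2 ≤ (G.neighborSet v).ncard} ∪
      {v : V | ∀ u ∈ G.neighborSet v, ¬ 2 ≤ (G.neighborSet u).ncard} ⊆
      Xᶜ ∩ {v | 2 ≤ (G.neighborSet v).ncard} ∪ X := by
    rintro v (h2 | hv)
    · exact or_iff_not_imp_right.mpr fun hX => ⟨hX, h2⟩
    · by_cases h2 : 2 ≤ (G.neighborSet v).ncard
      · exact Or.inl ⟨fun hX => by have := hX.1; omega, h2⟩
      · exact Or.inr ⟨by omega, fun u hu => by have := hv u hu; omega⟩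
  have hXc : ∀ ⦃u v⦄, G.Adj u v → u ∈ Xᶜ → v ∈ Xᶜ := fun u v h hu hv =>
    hu (mem_tinyComponentVerts_of_adj hv h.symm)
  calc _ ≤ (Xᶜ ∩ {v | 2 ≤ (G.neighborSet v).ncard} ∪ X).ncard := Set.ncard_le_ncard hT
    _ ≤ (Xᶜ ∩ {v | 2 ≤ (G.neighborSet v).ncard}).ncard + X.ncard := Set.ncard_union_le _ _
    _ ≤ 3 * (S ∩ Xᶜ).ncard + 2 * (S ∩ X).ncard :=
      add_le_add (hG.ncard_inter_setOf_two_le_ncard_neighborSet_le hS hXc)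
        (ncard_tinyComponentVerts_le hS)
    _ ≤ 3 * S.ncard := by
      have := Set.ncard_inter_add_ncard_sdiff_eq_ncard S X
      rw [Set.sdiff_eq] at this
      omega
end
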